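/- arXiv:1410.3786 — 3 statements merged into one kernel-verified Lean document; each statement's English description precedes it below -/
import Mathlib

section
/- Let f_c ≠ 0 and consider two targets k and ℓ with time shifts τ_k, τ_ℓ, frequency shifts f_k, f_ℓ, and target phases φ_k, φ_ℓ. Define ν_k¹ = f_k − 2 f_c τ_k, ν_k² = f_k + 2 f_c τ_k, ψ_k¹ = φ_k + f_c τ_k², ψ_k² = φ_k − f_c τ_k² (and similarly for ℓ), and the hypothesized time shifts τ_h(k, ℓ) = (ν_k¹ − ν_ℓ²)/(−4 f_c) and τ_h(ℓ, k) = (ν_ℓ¹ − ν_k²)/(−4 f_c). If both cross-matching phase conditions hold, namely τ_h(k, ℓ)² = (ψ_k¹ − ψ_ℓ²)/(2 f_c) and τ_h(ℓ, k)² = (ψ_ℓ¹ − ψ_k²)/(2 f_c), then |f_k − f_ℓ| = 2 |f_c| · |τ_k − τ_ℓ|. -/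
/-!
Cleared of denominators, the matching test for `k` against `ℓ` reads
`(f_ℓ - f_k + 2 f_c (τ_k + τ_ℓ))² = 8 f_c (φ_k - φ_ℓ) + 8 f_c² (τ_k² + τ_ℓ²)`, and the test for
`ℓ` against `k` is the same with `k` and `ℓ` swapped. Adding the two cancels the unknown target
phases, and the parallelogram law `(A - B)² + (A + B)² = 2A² + 2B²` leaves
`(f_k - f_ℓ)² = (2 f_c (τ_k - τ_ℓ))²`.
-/

/-- The matching test for an observation with dechirped parameters
`(f - 2cτ, φ + cτ²)` on the chirp `c` against one with `(f' + 2cτ', φ' - cτ'²)` on the chirp `-c`. -/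
def CrossMatches (c τ f φ τ' f' φ' : ℝ) : Prop :=
  ((f - 2 * c * τ - (f' + 2 * c * τ')) / (-4 * c)) ^ 2 = (φ + c * τ ^ 2 - (φ' - c * τ' ^ 2)) / (2 * c)

theorem crossMatches_iff {c τ f φ τ' f' φ' : ℝ} (hc : c ≠ 0) :
    CrossMatches c τ f φ τ' f' φ' ↔
      (f' - f + 2 * c * (τ + τ')) ^ 2 = 8 * c * (φ - φ') + 8 * c ^ 2 * (τ ^ 2 + τ' ^ 2) := by
  unfold CrossMatches
  field_simp
  constructor <;> intro h
  · linear_combination h / 2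
  · linear_combination 2 * h

theorem CrossMatches.sq_sub_eq {c τ f φ τ' f' φ' : ℝ} (hc : c ≠ 0)
    (h : CrossMatches c τ f φ τ' f' φ') (h' : CrossMatches c τ' f' φ' τ f φ) :
    (f - f') ^ 2 = (2 * c * (τ - τ')) ^ 2 := by
  rw [crossMatches_iff hc] at h h'
  linear_combination (h + h') / 2

/-- If both cross-matching phase conditions hold for two targets `k` and `ℓ`
observed with a positive–negative chirp pair of rate `f_c`, then the target
parameters satisfy the ambiguity condition `|f_k - f_ℓ| = 2 |f_c| |τ_k - τ_ℓ|`. -/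
theorem ambiguity_condition (f_c τk τl fk fl φk φl : ℝ) (hfc : f_c ≠ 0)
    (νk₁ νk₂ νl₁ νl₂ ψk₁ ψk₂ ψl₁ ψl₂ τh_kl τh_lk : ℝ)
    (hνk₁ : νk₁ = fk - 2 * f_c * τk) (hνk₂ : νk₂ = fk + 2 * f_c * τk)
    (hνl₁ : νl₁ = fl - 2 * f_c * τl) (hνl₂ : νl₂ = fl + 2 * f_c * τl)
    (hψk₁ : ψk₁ = φk + f_c * τk ^ 2) (hψk₂ : ψk₂ = φk - f_c * τk ^ 2)
    (hψl₁ : ψl₁ = φl + f_c * τl ^ 2) (hψl₂ : ψl₂ = φl - f_c * τl ^ 2)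
    (hτh_kl : τh_kl = (νk₁ - νl₂) / (-4 * f_c))
    (hτh_lk : τh_lk = (νl₁ - νk₂) / (-4 * f_c))
    (hmatch₁ : τh_kl ^ 2 = (ψk₁ - ψl₂) / (2 * f_c))
    (hmatch₂ : τh_lk ^ 2 = (ψl₁ - ψk₂) / (2 * f_c)) :
    |fk - fl| = 2 * |f_c| * |τk - τl| := by
  subst hνk₁ hνk₂ hνl₁ hνl₂ hψk₁ hψk₂ hψl₁ hψl₂ hτh_kl hτh_lk
  have hsq : (fk - fl) ^ 2 = (2 * f_c * (τk - τl)) ^ 2 :=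
    CrossMatches.sq_sub_eq hfc hmatch₁ hmatch₂
  rw [(sq_eq_sq_iff_abs_eq_abs _ _).mp hsq, abs_mul, abs_mul, abs_two]
end

section
/- Let f_c and f_c′ be two chirp rates with 0 < f_c, 0 < f_c′, and f_c ≠ f_c′, and consider two targets k and ℓ with time shifts τ_k, τ_ℓ, frequency shifts f_k, f_ℓ, and target phases φ_k, φ_ℓ. Suppose that for each of the two positive–negative chirp pairs (with rates ±f_c and ±f_c′) both cross-matching phase conditions hold, i.e., τ_h(k, ℓ)² = (ψ_k¹ − ψ_ℓ²)/(2 f_c) and τ_h(ℓ, k)² = (ψ_ℓ¹ − ψ_k²)/(2 f_c) for the pair with rate f_c, and the analogous two conditions for the pair with rate f_c′. Then τ_k = τ_ℓ and f_k = f_ℓ. That is, an ambiguity that persists under one chirp-rate pair is resolved by a second pair with a different chirp rate. -/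
/-!
Adding the two cross-matching conditions of one chirp pair cancels the unknown phases
`φ_k`, `φ_ℓ` and leaves `(f_k - f_ℓ)² = 4 f_c² (τ_k - τ_ℓ)²`: a pair with rate `f_c` cannot
separate targets lying on the lines `f_k - f_ℓ = ±2 f_c (τ_k - τ_ℓ)`. Two distinct positive
rates give two such relations with different slopes `4 f_c² ≠ 4 f_c'²`, which only the
coincident targets satisfy.
-/

/-- The matching test `τ_h(k, ℓ)² = (ψ_k¹ - ψ_ℓ²) / (2 c)` of the chirp pair with rate `c`, with the
dechirped frequencies and phases expanded in the target parameters. -/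
def CrossMatch (c τk τl fk fl φk φl : ℝ) : Prop :=
  (((fk - 2 * c * τk) - (fl + 2 * c * τl)) / (-4 * c)) ^ 2 =
    ((φk + c * τk ^ 2) - (φl - c * τl ^ 2)) / (2 * c)

theorem freq_sub_sq_eq_of_crossMatch {c τk τl fk fl φk φl : ℝ} (hc : c ≠ 0)
    (hkl : CrossMatch c τk τl fk fl φk φl) (hlk : CrossMatch c τl τk fl fk φl φk) :
    (fk - fl) ^ 2 = 4 * c ^ 2 * (τk - τl) ^ 2 := by
  unfold CrossMatch at hkl hlk
  field_simp at hkl hlk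
  refine mul_left_cancel₀ (a := 4 * c) (by positivity) ?_
  linear_combination c * (hkl + hlk)

theorem eq_zero_of_sq_eq_mul_sq {R : Type*} [CommRing R] [NoZeroDivisors R] {a x d d' : R}
    (hd : a ^ 2 = d * x ^ 2) (hd' : a ^ 2 = d' * x ^ 2) (hne : d ≠ d') : x = 0 ∧ a = 0 := by
  have hx : x = 0 := by
    have : (d - d') * x ^ 2 = 0 := by linear_combination hd' - hd
    exact pow_eq_zero_iff two_ne_zero |>.mp <|
      (mul_eq_zero.mp this).resolve_left (sub_ne_zero.mpr hne)
  refine ⟨hx, pow_eq_zero_iff two_ne_zero |>.mp ?_⟩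
  rw [hd, hx]
  ring

/-- An ambiguity that persists under one positive–negative chirp pair is resolved
by a second pair with a different chirp rate: if the cross-matching phase conditions
hold for two targets `k`, `ℓ` under both pairs (rates `±f_c` and `±f_c'` with
`0 < f_c`, `0 < f_c'`, `f_c ≠ f_c'`), then the two targets coincide in time shift
and frequency shift. -/
theorem second_chirp_pair_resolves_ambiguity
    (f_c f_c' τk τl fk fl φk φl : ℝ)
    (hfc : 0 < f_c) (hfc' : 0 < f_c') (hne : f_c ≠ f_c')
    (hmatch₁ : (((fk - 2 * f_c * τk) - (fl + 2 * f_c * τl)) / (-4 * f_c)) ^ 2 =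
      ((φk + f_c * τk ^ 2) - (φl - f_c * τl ^ 2)) / (2 * f_c))
    (hmatch₂ : (((fl - 2 * f_c * τl) - (fk + 2 * f_c * τk)) / (-4 * f_c)) ^ 2 =
      ((φl + f_c * τl ^ 2) - (φk - f_c * τk ^ 2)) / (2 * f_c))
    (hmatch₁' : (((fk - 2 * f_c' * τk) - (fl + 2 * f_c' * τl)) / (-4 * f_c')) ^ 2 =
      ((φk + f_c' * τk ^ 2) - (φl - f_c' * τl ^ 2)) / (2 * f_c'))
    (hmatch₂' : (((fl - 2 * f_c' * τl) - (fk + 2 * f_c' * τk)) / (-4 * f_c')) ^ 2 =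
      ((φl + f_c' * τl ^ 2) - (φk - f_c' * τk ^ 2)) / (2 * f_c')) :
    τk = τl ∧ fk = fl := by
  have hslope : 4 * f_c ^ 2 ≠ 4 * f_c' ^ 2 := by
    rw [Ne, mul_right_inj' four_ne_zero, sq_eq_sq₀ hfc.le hfc'.le]
    exact hne
  obtain ⟨hτ, hf⟩ := eq_zero_of_sq_eq_mul_sq
    (freq_sub_sq_eq_of_crossMatch hfc.ne' hmatch₁ hmatch₂)
    (freq_sub_sq_eq_of_crossMatch hfc'.ne' hmatch₁' hmatch₂') hslope
  exact ⟨sub_eq_zero.mp hτ, sub_eq_zero.mp hf⟩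
end

section
/- Let (Ω, ℱ, ℙ) be a probability space and let (γ_m)_{m≥1} be a sequence of independent real-valued, square-integrable random variables with mean zero and variances uniformly bounded by σ². Let (f_c^m)_{m≥1} be real chirp rates coming in positive–negative pairs, i.e., f_c^{m} = −f_c^{m−1} for every even m, and satisfying |f_c^m| ≥ c for some constant c > 0 and all m. Fix a target with frequency shift f ∈ ℝ and time shift τ ∈ ℝ, and for each even M define the estimator τ̂(M) = ( Σ_{m=1}^M (−2 f_c^m)( f − 2 f_c^m τ + γ_m ) ) / ( Σ_{m=1}^M 4 (f_c^m)² ). Then τ̂(M) converges to τ in probability as M → ∞ along even M: for every ε > 0, ℙ( |τ̂(M) − τ| > ε ) → 0. -/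
open MeasureTheory ProbabilityTheory Finset Filter

/-!
Because the chirp rates come in pairs `a, -a`, the frequency shift `f` cancels from the
numerator of `τ̂(M)` over an even number of pulses, leaving
`τ̂(M) - τ = (∑ wₘ γₘ) / ∑ wₘ²` with `wₘ = -2 f_c^m`. The errors are uncorrelated, so this
has mean zero and variance at most `σ² / ∑ wₘ² ≤ σ² / (4 c² M)`, and Chebyshev's inequality
gives convergence in probability.
-/

theorem sum_range_two_mul_eq_zero_of_odd_eq_neg {G : Type*} [AddCommGroup G] (a : ℕ → G)
    (ha : ∀ m, Odd m → a m = -a (m - 1)) (j : ℕ) : ∑ m ∈ range (2 * j), a m = 0 := by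
  induction j with
  | zero => simp
  | succ j ih =>
    rw [show 2 * (j + 1) = 2 * j + 1 + 1 by ring, sum_range_succ, sum_range_succ, ih,
      ha (2 * j + 1) ⟨j, rfl⟩, Nat.add_sub_cancel]
    abel

theorem card_mul_sq_le_sum_sq {ι : Type*} (s : Finset ι) (a : ι → ℝ) {c : ℝ}
    (hc : ∀ i ∈ s, c ≤ |a i|) (hc₀ : 0 ≤ c) : #s * c ^ 2 ≤ ∑ i ∈ s, a i ^ 2 := by
  rw [← nsmul_eq_mul, ← sum_const]
  refine sum_le_sum fun i hi => ?_
  simpa [sq_abs] using pow_le_pow_left₀ hc₀ (hc i hi) 2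

theorem least_squares_shift_sub_eq {ι : Type*} (s : Finset ι) (a g : ι → ℝ) (f τ : ℝ)
    (ha : ∑ i ∈ s, a i = 0) (hD : ∑ i ∈ s, (-2 * a i) ^ 2 ≠ 0) :
    (∑ i ∈ s, (-2 * a i) * (f - 2 * a i * τ + g i)) / (∑ i ∈ s, 4 * a i ^ 2) - τ =
      (∑ i ∈ s, (-2 * a i) * g i) / ∑ i ∈ s, (-2 * a i) ^ 2 := by
  have hsq : ∑ i ∈ s, 4 * a i ^ 2 = ∑ i ∈ s, (-2 * a i) ^ 2 := sum_congr rfl fun i _ => by ring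
  have hnum : ∑ i ∈ s, (-2 * a i) * (f - 2 * a i * τ + g i) =
      -2 * f * ∑ i ∈ s, a i + τ * ∑ i ∈ s, 4 * a i ^ 2 + ∑ i ∈ s, (-2 * a i) * g i := by
    simp only [mul_sum, ← sum_add_distrib]
    exact sum_congr rfl fun i _ => by ring
  rw [hnum, ha, hsq, div_sub' hD]
  ring

section WeightedSum

variable {Ω ι : Type*} {mΩ : MeasurableSpace Ω} {μ : Measure Ω} [IsProbabilityMeasure μ]
  {γ : ι → Ω → ℝ} {σ : ℝ}

theorem variance_weighted_sum_le (hindep : Pairwise fun i j => γ i ⟂ᵢ[μ] γ j)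
    (hL2 : ∀ i, MemLp (γ i) 2 μ) (hvar : ∀ i, ∫ ω, γ i ω ^ 2 ∂μ ≤ σ ^ 2)
    (s : Finset ι) (w : ι → ℝ) :
    variance (fun ω => ∑ i ∈ s, w i * γ i ω) μ ≤ σ ^ 2 * ∑ i ∈ s, w i ^ 2 := by
  have hsum : (fun ω => ∑ i ∈ s, w i * γ i ω) = ∑ i ∈ s, fun ω => w i * γ i ω := by
    ext ω
    simp
  rw [hsum, IndepFun.variance_sum (fun i _ => (hL2 i).const_mul _)
    fun i _ j _ hij => (hindep hij).comp (measurable_const_mul _) (measurable_const_mul _),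
    mul_sum]
  refine sum_le_sum fun i _ => ?_
  rw [variance_const_mul, mul_comm]
  gcongr
  exact (variance_le_expectation_sq (hL2 i).aestronglyMeasurable).trans (hvar i)

theorem measure_le_abs_weighted_sum_div_le (hindep : Pairwise fun i j => γ i ⟂ᵢ[μ] γ j)
    (hL2 : ∀ i, MemLp (γ i) 2 μ) (hmean : ∀ i, ∫ ω, γ i ω ∂μ = 0)
    (hvar : ∀ i, ∫ ω, γ i ω ^ 2 ∂μ ≤ σ ^ 2) (s : Finset ι) (w : ι → ℝ)
    (hD : 0 < ∑ i ∈ s, w i ^ 2) {ε : ℝ} (hε : 0 < ε) :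
    μ {ω | ε ≤ |(∑ i ∈ s, w i * γ i ω) / ∑ i ∈ s, w i ^ 2|} ≤
      ENNReal.ofReal (σ ^ 2 / (ε ^ 2 * ∑ i ∈ s, w i ^ 2)) := by
  set D := ∑ i ∈ s, w i ^ 2
  set S := fun ω => ∑ i ∈ s, w i * γ i ω
  have hS : MemLp S 2 μ := memLp_finsetSum s fun i _ => (hL2 i).const_mul _
  have hS_mean : ∫ ω, S ω ∂μ = 0 := by
    simp only [S, integral_finsetSum s fun i _ => ((hL2 i).const_mul (w i)).integrable one_le_two,
      integral_const_mul, hmean, mul_zero, sum_const_zero]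
  have hevent : {ω | ε ≤ |S ω / D|} = {ω | ε * D ≤ |S ω - ∫ ω, S ω ∂μ|} := by
    ext ω
    rw [Set.mem_ofPred_eq, Set.mem_ofPred_eq, hS_mean, sub_zero, abs_div, abs_of_pos hD,
      le_div_iff₀ hD]
  calc μ {ω | ε ≤ |S ω / D|}
      ≤ ENNReal.ofReal (variance S μ / (ε * D) ^ 2) :=
        hevent ▸ meas_ge_le_variance_div_sq hS (mul_pos hε hD)
    _ ≤ ENNReal.ofReal (σ ^ 2 * D / (ε * D) ^ 2) := by
        gcongr
        exact variance_weighted_sum_le hindep hL2 hvar s w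
    _ = ENNReal.ofReal (σ ^ 2 / (ε ^ 2 * D)) := by
        congr 1
        field_simp

end WeightedSum

/-- Asymptotically perfect recovery of the time shift with noise: with chirp rates
in positive–negative pairs, bounded below in magnitude by `c > 0`, and independent
zero-mean frequency-estimation errors of uniformly bounded variance, the
least-squares estimator
`τ̂(M) = (Σ_{m<M} (-2 f_c^m)(f - 2 f_c^m τ + γ_m)) / (Σ_{m<M} 4 (f_c^m)²)`
converges to `τ` in probability as `M → ∞` along even `M`. -/
theorem time_shift_estimator_consistent
    {Ω : Type*} [MeasureSpace Ω] [IsProbabilityMeasure (ℙ : Measure Ω)]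
    (γ : ℕ → Ω → ℝ)
    (hindep : iIndepFun γ ℙ)
    (hL2 : ∀ m, MemLp (γ m) 2 ℙ)
    (σ : ℝ) (hmean : ∀ m, ∫ ω, γ m ω = 0)
    (hvar : ∀ m, ∫ ω, (γ m ω) ^ 2 ≤ σ ^ 2)
    (f_c : ℕ → ℝ) (hpair : ∀ m, Odd m → f_c m = -f_c (m - 1))
    (c : ℝ) (hc : 0 < c) (hlb : ∀ m, c ≤ |f_c m|)
    (f τ : ℝ)
    (τhat : ℕ → Ω → ℝ)
    (hτhat : ∀ M ω, τhat M ω =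
      (∑ m ∈ Finset.range M, (-2 * f_c m) * (f - 2 * f_c m * τ + γ m ω)) /
        (∑ m ∈ Finset.range M, 4 * f_c m ^ 2)) :
    ∀ ε > (0 : ℝ),
      Tendsto (fun j : ℕ => ℙ {ω | ε < |τhat (2 * j) ω - τ|}) atTop (nhds 0) := by
  intro ε hε
  have hbound : ∀ j : ℕ, 1 ≤ j → ℙ {ω | ε < |τhat (2 * j) ω - τ|} ≤
      ENNReal.ofReal (σ ^ 2 / (ε ^ 2 * (8 * c ^ 2)) / j) := by
    intro j hj
    set D := ∑ m ∈ range (2 * j), (-2 * f_c m) ^ 2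
    have hD : 8 * c ^ 2 * j ≤ D :=
      calc 8 * c ^ 2 * j = #(range (2 * j)) * (2 * c) ^ 2 := by push_cast [card_range]; ring
        _ ≤ D := card_mul_sq_le_sum_sq _ (fun m => -2 * f_c m)
          (fun m _ => by simpa [abs_mul] using hlb m) (by positivity)
    have hDpos : 0 < D := lt_of_lt_of_le (by positivity) hD
    calc ℙ {ω | ε < |τhat (2 * j) ω - τ|}
        ≤ ℙ {ω | ε ≤ |(∑ m ∈ range (2 * j), (-2 * f_c m) * γ m ω) / D|} := by
          refine measure_mono fun ω hω => ?_
          rw [Set.mem_ofPred_eq, hτhat, least_squares_shift_sub_eq _ _ _ _ _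
            (sum_range_two_mul_eq_zero_of_odd_eq_neg f_c hpair j) hDpos.ne'] at hω
          exact hω.le
      _ ≤ ENNReal.ofReal (σ ^ 2 / (ε ^ 2 * D)) :=
          measure_le_abs_weighted_sum_div_le (fun _ _ hij => hindep.indepFun hij) hL2 hmean hvar
            _ _ hDpos hε
      _ ≤ ENNReal.ofReal (σ ^ 2 / (ε ^ 2 * (8 * c ^ 2)) / j) := by
          refine ENNReal.ofReal_le_ofReal ?_
          rw [div_div, mul_assoc]
          exact div_le_div_of_nonneg_left (sq_nonneg σ) (by positivity)
            (mul_le_mul_of_nonneg_left hD (sq_nonneg ε))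
  exact tendsto_of_tendsto_of_tendsto_of_le_of_le' tendsto_const_nhds
    (ENNReal.ofReal_zero ▸ ENNReal.tendsto_ofReal (tendsto_const_div_atTop_nhds_zero_nat _))
    (Eventually.of_forall fun _ => zero_le) ((eventually_ge_atTop 1).mono hbound)
end
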